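/- The Hermite subdivision operator S_{a^1} with the mask a^1 given below does not satisfy the spectral condition of order 3: there is no polynomial p of degree 3 with leading coefficient 1/3! such that S_{a^1} v_p = 2^{-3} v_p. Mask on {−2,…,2}: a^1_{−2} = [[1/128, 7/256],[0, 1/16]], a^1_{−1} = [[1/2, −1/16],[15/16, −7/32]], a^1_0 = [[63/64, 0],[0, 3/8]], a^1_1 = [[1/2, 1/16],[−15/16, −7/32]], a^1_2 = [[1/128, −7/256],[0, 1/16]]. -/

import Mathlib

noncomputable def subd {d : ℕ} (A : ℤ → Matrix (Fin (d+1)) (Fin (d+1)) ℝ)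
    (c : ℤ → Fin (d+1) → ℝ) : ℤ → Fin (d+1) → ℝ :=
  fun j => ∑ᶠ k : ℤ, (A (j - 2*k)).mulVec (c k)

noncomputable def vF (d : ℕ) (f : ℝ → ℝ) : ℤ → Fin (d+1) → ℝ :=
  fun j m => iteratedDeriv (m : ℕ) f (j : ℝ)

noncomputable def vP (d : ℕ) (p : Polynomial ℝ) : ℤ → Fin (d+1) → ℝ :=
  fun j m => (Polynomial.derivative^[(m : ℕ)] p).eval (j : ℝ)

noncomputable def Dinv (d n : ℕ) (c : ℤ → Fin (d+1) → ℝ) : ℤ → Fin (d+1) → ℝ :=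
  fun j m => (2:ℝ)^(n * (m:ℕ)) * c j m

def Reproduces {d : ℕ} (A : ℤ → Matrix (Fin (d+1)) (Fin (d+1)) ℝ) (τ : ℝ) (f : ℝ → ℝ) : Prop :=
  ∀ (n : ℕ) (j : ℤ) (m : Fin (d+1)),
    Dinv d n ((subd A)^[n] (fun i m => iteratedDeriv (m:ℕ) f ((i:ℝ)+τ))) j m
      = iteratedDeriv (m:ℕ) f (((2:ℝ)^n)⁻¹ * ((j:ℝ)+τ))

noncomputable def a1 (j : ℤ) : Matrix (Fin 2) (Fin 2) ℝ :=
  if j = -2 then !![1/128, 7/256; 0, 1/16]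
  else if j = -1 then !![1/2, -1/16; 15/16, -7/32]
  else if j = 0 then !![63/64, 0; 0, 3/8]
  else if j = 1 then !![1/2, 1/16; -15/16, -7/32]
  else if j = 2 then !![1/128, -7/256; 0, 1/16]
  else 0

noncomputable def a2 (j : ℤ) : Matrix (Fin 2) (Fin 2) ℝ :=
  if j = -2 then !![7/96, -25/1344; 77/384, -19/384]
  else if j = -1 then !![1/2, -5/56; 7/12, -1/24]
  else if j = 0 then !![41/48, 0; 0, 19/96]
  else if j = 1 then !![1/2, 5/56; -7/12, -1/24]
  else if j = 2 then !![7/96, 25/1344; -77/384, -19/384]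
  else 0

/-! Only the derivative components at `j = -1, 0, 1` are needed. The relation at `j = 0` forces
`b = -1/6`; the difference of the relations at `j = ±1` reads `a = a / 2`, and with `a = 0` either
of them gives `b = 1/24`. -/

theorem subd_apply_eq_sum {d : ℕ} (A : ℤ → Matrix (Fin (d+1)) (Fin (d+1)) ℝ)
    (c : ℤ → Fin (d+1) → ℝ) (j : ℤ) (s : Finset ℤ) (hs : ∀ k ∉ s, A (j - 2*k) = 0) :
    subd A c j = ∑ k ∈ s, (A (j - 2*k)).mulVec (c k) := by
  refine finsum_eq_sum_of_support_subset _ fun k hk => ?_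
  by_contra hks
  simp [hs k hks] at hk

theorem a1_eq_zero_of_notMem_Icc {j : ℤ} (hj : j ∉ Finset.Icc (-2) 2) : a1 j = 0 := by
  rw [Finset.mem_Icc] at hj
  unfold a1
  split_ifs <;> first | rfl | omega

theorem subd_a1_apply_neg_one_one (c : ℤ → Fin 2 → ℝ) :
    subd a1 c (-1) 1 = 15/16 * (c 0 0 - c (-1) 0) - 7/32 * (c (-1) 1 + c 0 1) := by
  rw [subd_apply_eq_sum a1 c (-1) {-1, 0} fun k hk =>
    a1_eq_zero_of_notMem_Icc (by simp at hk ⊢; omega)]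
  simp [a1]
  ring

theorem subd_a1_apply_zero_one (c : ℤ → Fin 2 → ℝ) :
    subd a1 c 0 1 = (c (-1) 1 + c 1 1) / 16 + 3/8 * c 0 1 := by
  rw [subd_apply_eq_sum a1 c 0 {-1, 0, 1} fun k hk =>
    a1_eq_zero_of_notMem_Icc (by simp at hk ⊢; omega)]
  simp [a1]
  ring

theorem subd_a1_apply_one_one (c : ℤ → Fin 2 → ℝ) :
    subd a1 c 1 1 = 15/16 * (c 1 0 - c 0 0) - 7/32 * (c 0 1 + c 1 1) := by
  rw [subd_apply_eq_sum a1 c 1 {0, 1} fun k hk =>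
    a1_eq_zero_of_notMem_Icc (by simp at hk ⊢; omega)]
  simp [a1]
  ring

theorem hasDerivAt_cubic (a b c x : ℝ) :
    HasDerivAt (fun x : ℝ => x^3/6 + a*x^2 + b*x + c) (x^2/2 + 2*a*x + b) x :=
  ((((hasDerivAt_pow 3 x).div_const 6).add ((hasDerivAt_pow 2 x).const_mul a)).add
    ((hasDerivAt_id x).const_mul b)).add_const c |>.congr_deriv (by push_cast; ring)

theorem vF_apply_zero (d : ℕ) (f : ℝ → ℝ) (j : ℤ) : vF d f j 0 = f j := rfl

theorem vF_apply_one (d : ℕ) (f : ℝ → ℝ) (j : ℤ) : vF (d+1) f j 1 = deriv f j := by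
  simp [vF]

theorem a1_no_spectral_order_three :
    ¬ ∃ a b c : ℝ,
      subd a1 (vF 1 (fun x => x^3/6 + a*x^2 + b*x + c))
        = fun j => ((2:ℝ)^(3:ℕ))⁻¹ • vF 1 (fun x => x^3/6 + a*x^2 + b*x + c) j := by
  rintro ⟨a, b, c, h⟩
  have eigen (j : ℤ) := congrFun (congrFun h j) 1
  have at_neg_one := eigen (-1)
  have at_zero := eigen 0
  have at_one := eigen 1
  rw [subd_a1_apply_neg_one_one] at at_neg_one
  rw [subd_a1_apply_zero_one] at at_zero
  rw [subd_a1_apply_one_one] at at_one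
  simp only [Pi.smul_apply, smul_eq_mul, vF_apply_zero, vF_apply_one,
    (hasDerivAt_cubic _ _ _ _).deriv] at at_neg_one at_zero at_one
  push_cast at at_neg_one at_zero at_one
  have hb : b = -1/6 := by linarith only [at_zero]
  have ha : a = 0 := by linarith only [at_neg_one, at_one]
  have hb' : b = 1/24 := by linarith only [at_one, ha]
  linarith only [hb, hb']
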